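/- Assume 1 ∉ I(a) ∪ I(b), with the A_i four distinct points of ℙ^1 with nonzero coordinates avoiding W, and j ≠ l in I(b). Then the lines P_i^A ⋆ Q_j^A ⋆ L^A and P_i^A ⋆ Q_l^A ⋆ L^A meet exactly in the point whose t-th coordinate is (−1)^{t+1} (α_t+iβ_t)(jα_t+β_t)(lα_t+β_t) / (α_tβ_t Π_{r≠t}(α_{min(t,r)}β_{max(t,r)} − α_{max(t,r)}β_{min(t,r)})), with signs as in formula (5.1) of the source. -/

import Mathlib

/-- The point P_i^A ⋆ Q_j^A ∈ ℙ³ (affine representative). -/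
noncomputable def PQvec (α β : Fin 4 → ℂ) (i j : ℕ) : Fin 4 → ℂ :=
  fun t => ((α t + (i : ℂ) * β t) * ((j : ℂ) * α t + β t)) / (α t * β t)

/-- The cone over the line L^A: solutions of Σ α_t x_t = 0 = Σ β_t x_t. -/
def LAset (α β : Fin 4 → ℂ) : Set (Fin 4 → ℂ) :=
  {x | (∑ t, α t * x t) = 0 ∧ (∑ t, β t * x t) = 0}

/-- The line P_i^A ⋆ Q_j^A ⋆ L^A, as a subset of ℙ³. -/
def lineIJ (α β : Fin 4 → ℂ) (i j : ℕ) : Set (Projectivization ℂ (Fin 4 → ℂ)) :=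
  {z | ∃ x ∈ LAset α β, ∃ h : (fun t => PQvec α β i j t * x t) ≠ 0,
    z = Projectivization.mk ℂ (fun t => PQvec α β i j t * x t) h}

/-- The 2×2 minor α_uβ_v − α_vβ_u. -/
def Dd (α β : Fin 4 → ℂ) (u v : Fin 4) : ℂ := α u * β v - α v * β u

/-- The representative of the intersection point of the lines P_i⋆Q_j⋆L^A and
P_i⋆Q_l⋆L^A (formula (5.1) of the source). -/
noncomputable def Vvec (α β : Fin 4 → ℂ) (i j l : ℕ) : Fin 4 → ℂ := fun t =>
  (-1 : ℂ) ^ ((t : ℕ) + 1) *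
    ((α t + (i : ℂ) * β t) * ((j : ℂ) * α t + β t) * ((l : ℂ) * α t + β t)) /
    (α t * β t * ∏ r ∈ Finset.univ.erase t, Dd α β (min t r) (max t r))

/-!
A point of `P_i ⋆ Q_j ⋆ L^A` has the form `PQ_{ij} · x` with `x` in the plane `L^A`. Writing a
common point as `PQ_{ij} · x = u · PQ_{il} · y` and `x = (l α + β) · w`, one finds that both
`(l α + β) · w` and `(j α + β) · w` lie on `L^A`; since `j ≠ l` this says exactly that `w` is a
linear relation among the images `(α_t², α_t β_t, β_t²)` of the four points under the Veronese
map. For four distinct points these images span `ℂ³`, so the relation `w` is unique up to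
scale, and it is given by the maximal minors of the `3 × 4` matrix, which are Vandermonde
determinants. Substituting back yields (5.1).
-/

open Finset

def IsVeroneseRelation (α β w : Fin 4 → ℂ) : Prop :=
  ∑ t, α t ^ 2 * w t = 0 ∧ ∑ t, α t * β t * w t = 0 ∧ ∑ t, β t ^ 2 * w t = 0

/-- The signed maximal minors of the `3 × 4` matrix with columns `(α_t², α_t β_t, β_t²)`, each a
Vandermonde determinant in the `Dd`'s. -/
def veroneseRelation (α β : Fin 4 → ℂ) : Fin 4 → ℂ :=
  ![-(Dd α β 1 2 * Dd α β 1 3 * Dd α β 2 3), Dd α β 0 2 * Dd α β 0 3 * Dd α β 2 3,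
    -(Dd α β 0 1 * Dd α β 0 3 * Dd α β 1 3), Dd α β 0 1 * Dd α β 0 2 * Dd α β 1 2]

def minorProd (α β : Fin 4 → ℂ) : ℂ :=
  Dd α β 0 1 * Dd α β 0 2 * Dd α β 0 3 * Dd α β 1 2 * Dd α β 1 3 * Dd α β 2 3

section

variable {α β w : Fin 4 → ℂ}

theorem isVeroneseRelation_veroneseRelation (α β : Fin 4 → ℂ) :
    IsVeroneseRelation α β (veroneseRelation α β) := by
  refine ⟨?_, ?_, ?_⟩ <;> simp [Fin.sum_univ_four, veroneseRelation, Dd] <;> ring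

theorem smul_mem_LAset {x : Fin 4 → ℂ} (hx : x ∈ LAset α β) (c : ℂ) : c • x ∈ LAset α β := by
  obtain ⟨h₁, h₂⟩ := hx
  simp only [LAset, Set.mem_ofPred_eq, Pi.smul_apply, smul_eq_mul, mul_left_comm _ c,
    ← mul_sum, h₁, h₂, mul_zero, and_self]

theorem IsVeroneseRelation.linear_mul_mem_LAset (hw : IsVeroneseRelation α β w) (c : ℂ) :
    (fun t => (c * α t + β t) * w t) ∈ LAset α β := by
  obtain ⟨h₁, h₂, h₃⟩ := hw
  simp only [LAset, Set.mem_ofPred_eq, Fin.sum_univ_four] at *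
  constructor
  · linear_combination c * h₁ + h₂
  · linear_combination c * h₂ + h₃

theorem isVeroneseRelation_of_linear_mul_mem_LAset {c d : ℂ} (hcd : c ≠ d)
    (hc : (fun t => (c * α t + β t) * w t) ∈ LAset α β)
    (hd : (fun t => (d * α t + β t) * w t) ∈ LAset α β) : IsVeroneseRelation α β w := by
  obtain ⟨hc₁, hc₂⟩ := hc
  obtain ⟨hd₁, hd₂⟩ := hd
  simp only [IsVeroneseRelation, Fin.sum_univ_four] at *
  have h₁ : α 0 ^ 2 * w 0 + α 1 ^ 2 * w 1 + α 2 ^ 2 * w 2 + α 3 ^ 2 * w 3 = 0 :=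
    mul_left_cancel₀ (sub_ne_zero.2 hcd) (by linear_combination hc₁ - hd₁)
  have h₂ : α 0 * β 0 * w 0 + α 1 * β 1 * w 1 + α 2 * β 2 * w 2 + α 3 * β 3 * w 3 = 0 := by
    linear_combination hc₁ - c * h₁
  exact ⟨h₁, h₂, by linear_combination hc₂ - c * h₂⟩

theorem IsVeroneseRelation.sum_Dd_mul_Dd (hw : IsVeroneseRelation α β w) (a b : Fin 4) :
    ∑ t, Dd α β t a * Dd α β t b * w t = 0 := by
  obtain ⟨h₁, h₂, h₃⟩ := hw
  simp only [Dd, Fin.sum_univ_four] at *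
  linear_combination β a * β b * h₁ - (α a * β b + α b * β a) * h₂ + α a * α b * h₃

theorem IsVeroneseRelation.exists_eq_smul_veroneseRelation
    (hD : ∀ u v, u ≠ v → Dd α β u v ≠ 0) (hw : IsVeroneseRelation α β w) :
    ∃ c : ℂ, w = c • veroneseRelation α β := by
  have h₀ : veroneseRelation α β 0 ≠ 0 := by simp [veroneseRelation, hD]
  -- The quadric `Dd · a * Dd · b` vanishes at `A_a` and `A_b`, so with `{a, b} = {1, 2, 3} \ {t}`
  -- the relation `w` evaluated on it only sees `w 0` and `w t`.
  have key : ∀ t, w t * veroneseRelation α β 0 = w 0 * veroneseRelation α β t := by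
    have q := hw.sum_Dd_mul_Dd
    simp only [Fin.sum_univ_four, Dd] at q
    intro t
    fin_cases t <;> simp only [veroneseRelation, Dd, Fin.zero_eta, Fin.mk_one, Fin.reduceFinMk,
      Matrix.cons_val]
    · linear_combination (α 3 * β 2 - α 2 * β 3) * q 2 3
    · linear_combination (α 1 * β 3 - α 3 * β 1) * q 1 3
    · linear_combination (α 2 * β 1 - α 1 * β 2) * q 1 2
  refine ⟨w 0 / veroneseRelation α β 0, funext fun t => ?_⟩
  rw [Pi.smul_apply, smul_eq_mul, div_mul_eq_mul_div, eq_div_iff h₀, key]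

end

section

variable {α β : Fin 4 → ℂ}

theorem PQvec_ne_zero {i j : ℕ} {t : Fin 4} (hα : α t ≠ 0) (hβ : β t ≠ 0)
    (hi : α t + i * β t ≠ 0) (hj : j * α t + β t ≠ 0) : PQvec α β i j t ≠ 0 :=
  div_ne_zero (mul_ne_zero hi hj) (mul_ne_zero hα hβ)

theorem PQvec_mul_comm (α β : Fin 4 → ℂ) (i j l : ℕ) (t : Fin 4) :
    PQvec α β i j t * (l * α t + β t) = PQvec α β i l t * (j * α t + β t) := by
  simp only [PQvec]
  ring

theorem Vvec_comm (α β : Fin 4 → ℂ) (i j l : ℕ) : Vvec α β i j l = Vvec α β i l j :=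
  funext fun t => by simp only [Vvec]; ring

theorem PQvec_mul_veroneseRelation (hD : ∀ u v, u ≠ v → Dd α β u v ≠ 0) (i j l : ℕ)
    (t : Fin 4) : PQvec α β i j t * ((l * α t + β t) * veroneseRelation α β t) =
      minorProd α β * Vvec α β i j l t := by
  have := hD 0 1 (by decide); have := hD 0 2 (by decide); have := hD 0 3 (by decide)
  have := hD 1 2 (by decide); have := hD 1 3 (by decide); have := hD 2 3 (by decide)
  fin_cases t <;>
    simp [PQvec, Vvec, veroneseRelation, minorProd, ← filter_ne', Fin.prod_univ_four,
      prod_filter] <;>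
    field_simp

theorem setOf_mk_Vvec_subset_lineIJ (hD : ∀ u v, u ≠ v → Dd α β u v ≠ 0) (i j l : ℕ) :
    {z | ∃ h : Vvec α β i j l ≠ 0, z = Projectivization.mk ℂ (Vvec α β i j l) h} ⊆
      lineIJ α β i j := by
  rintro _ ⟨hV, rfl⟩
  have hK : minorProd α β ≠ 0 := by simp [minorProd, hD]
  have hp : (fun t => PQvec α β i j t * ((l * α t + β t) * veroneseRelation α β t)) =
      minorProd α β • Vvec α β i j l :=
    funext (PQvec_mul_veroneseRelation hD i j l)
  refine ⟨_, (isVeroneseRelation_veroneseRelation α β).linear_mul_mem_LAset l,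
    hp ▸ smul_ne_zero hK hV, ?_⟩
  rw [Projectivization.mk_eq_mk_iff']
  exact ⟨(minorProd α β)⁻¹, by rw [hp, smul_smul, inv_mul_cancel₀ hK, one_smul]⟩

theorem exists_PQvec_mul_eq_smul_Vvec (hD : ∀ u v, u ≠ v → Dd α β u v ≠ 0)
    (hα : ∀ t, α t ≠ 0) (hβ : ∀ t, β t ≠ 0) {i j l : ℕ} (hi : ∀ t, α t + i * β t ≠ 0)
    (hl : ∀ t, l * α t + β t ≠ 0) (hjl : j ≠ l)
    {x y : Fin 4 → ℂ} (hx : x ∈ LAset α β) (hy : y ∈ LAset α β) {u : ℂ}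
    (hxy : u • (fun t => PQvec α β i l t * y t) = fun t => PQvec α β i j t * x t) :
    ∃ c : ℂ, (fun t => PQvec α β i j t * x t) = c • Vvec α β i j l := by
  set w : Fin 4 → ℂ := fun t => x t / (l * α t + β t)
  have hxw : x = fun t => (l * α t + β t) * w t :=
    funext fun t => (mul_div_cancel₀ _ (hl t)).symm
  have hyw : (fun t => (j * α t + β t) * w t) = u • y := by
    funext t
    refine mul_left_cancel₀ (PQvec_ne_zero (hα t) (hβ t) (hi t) (hl t)) ?_
    calc PQvec α β i l t * ((j * α t + β t) * w t)
        = PQvec α β i j t * x t := by rw [hxw, ← mul_assoc, ← PQvec_mul_comm, mul_assoc]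
      _ = PQvec α β i l t * (u • y) t := by
          rw [← congrFun hxy t]; simp only [Pi.smul_apply, smul_eq_mul]; ring
  have hw : IsVeroneseRelation α β w :=
    isVeroneseRelation_of_linear_mul_mem_LAset (Nat.cast_injective.ne hjl)
      (hyw ▸ smul_mem_LAset hy u) (hxw ▸ hx)
  obtain ⟨c, hc⟩ := hw.exists_eq_smul_veroneseRelation hD
  refine ⟨c * minorProd α β, funext fun t => ?_⟩
  simp only [hxw, hc, Pi.smul_apply, smul_eq_mul]
  linear_combination c * PQvec_mul_veroneseRelation hD i j l t

end

theorem lines_intersection_point_general (α β : Fin 4 → ℂ)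
    (hα : ∀ t, α t ≠ 0) (hβ : ∀ t, β t ≠ 0)
    (hdist : ∀ t s : Fin 4, t ≠ s → α t * β s ≠ α s * β t)
    (hW : ∀ t, ∀ m : ℕ, 1 ≤ m → β t ≠ -(m : ℂ) * α t ∧ (m : ℂ) * β t ≠ -α t)
    (i : ℕ) (j l : ℕ) (hjl : j ≠ l) :
    lineIJ α β i j ∩ lineIJ α β i l =
      {z | ∃ h : Vvec α β i j l ≠ 0, z = Projectivization.mk ℂ (Vvec α β i j l) h} := by
  have hD : ∀ u v, u ≠ v → Dd α β u v ≠ 0 := fun u v h => sub_ne_zero.2 (hdist u v h)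
  have hlin : ∀ (m : ℕ) t, (m : ℂ) * α t + β t ≠ 0 := by
    rintro (_ | m) t h
    · exact hβ t (by simpa using h)
    · exact (hW t (m + 1) m.succ_pos).1 (by linear_combination h)
  have hlin' : ∀ (m : ℕ) t, α t + (m : ℂ) * β t ≠ 0 := by
    rintro (_ | m) t h
    · exact hα t (by simpa using h)
    · exact (hW t (m + 1) m.succ_pos).2 (by linear_combination h)
  refine Set.Subset.antisymm ?_ (Set.subset_inter (setOf_mk_Vvec_subset_lineIJ hD i j l)
    (Vvec_comm α β i j l ▸ setOf_mk_Vvec_subset_lineIJ hD i l j))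
  rintro _ ⟨⟨x, hx, hx0, rfl⟩, y, hy, hy0, hxy⟩
  obtain ⟨u, hu⟩ := (Projectivization.mk_eq_mk_iff' ℂ _ _ hx0 hy0).1 hxy
  obtain ⟨c, hc⟩ := exists_PQvec_mul_eq_smul_Vvec hD hα hβ (hlin' i) (hlin l) hjl hx hy hu
  have hV : Vvec α β i j l ≠ 0 := fun h => hx0 (by rw [hc, h, smul_zero])
  exact ⟨hV, (Projectivization.mk_eq_mk_iff' ℂ _ _ hx0 hV).2 ⟨c, hc.symm⟩⟩

/-- for j ≠ l, the lines P_i⋆Q_j⋆L^A and P_i⋆Q_l⋆L^A meet exactly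
in the point with the coordinates (5.1). -/
theorem lines_intersection_point (α β : Fin 4 → ℂ)
    (hα : ∀ t, α t ≠ 0) (hβ : ∀ t, β t ≠ 0)
    (hdist : ∀ t s : Fin 4, t ≠ s → α t * β s ≠ α s * β t)
    (hW : ∀ t, ∀ m : ℕ, 1 ≤ m → β t ≠ -(m : ℂ) * α t ∧ (m : ℂ) * β t ≠ -α t)
    (a b : ℕ) (Ia Ib : Finset ℕ) (hIa : Ia.card = a) (hIb : Ib.card = b)
    (h0a : 0 ∈ Ia) (h0b : 0 ∈ Ib) (h1a : 1 ∉ Ia) (h1b : 1 ∉ Ib)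
    (i : ℕ) (hi : i ∈ Ia) (j l : ℕ) (hj : j ∈ Ib) (hl : l ∈ Ib) (hjl : j ≠ l) :
    lineIJ α β i j ∩ lineIJ α β i l =
      {z | ∃ h : Vvec α β i j l ≠ 0, z = Projectivization.mk ℂ (Vvec α β i j l) h} :=
  lines_intersection_point_general α β hα hβ hdist hW i j l hjl
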